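/- Let goods be indexed 1,…,m with an additive valuation v satisfying v(1) ≥ v(2) ≥ … ≥ v(m), and let n ≥ 2 be an integer. Let g_1, g_2, g_3, g_4 ∈ {1,…,m} be pairwise distinct goods with g_1 ≥ 3n−2, g_2 ≥ 3n−1, g_3 ≥ 3n and g_4 ≥ 3n+1. Then MMS^{n−1}_v({1,…,m} ∖ {g_1, g_2, g_3, g_4}) ≥ MMS^n_v({1,…,m}). -/
import Mathlib


open Finset

/-- `P` is a partition of the finite set `S` of goods into `d` (possibly empty) bundles. -/
def IsPartition {d : ℕ} (P : Fin d → Finset ℕ) (S : Finset ℕ) : Prop :=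
  (∀ i j : Fin d, i ≠ j → Disjoint (P i) (P j)) ∧ Finset.univ.biUnion P = S

/-- The maximin share `MMS^d_v(S)`: the maximum, over all partitions of `S` into `d`
(possibly empty) bundles, of the minimum bundle value under the additive valuation `v`. -/
noncomputable def MMS (v : ℕ → ℝ) (d : ℕ) (S : Finset ℕ) : ℝ :=
  sSup {x : ℝ | ∃ P : Fin d → Finset ℕ, IsPartition P S ∧ x = ⨅ j, (P j).sum v}

lemma partition_subset {d : ℕ} {P : Fin d → Finset ℕ} {S : Finset ℕ}
    (hP : IsPartition P S) (i : Fin d) : P i ⊆ S := by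
  rw [← hP.2]; exact subset_biUnion_of_mem _ (mem_univ i)

lemma exists_partition {d : ℕ} (hd : 0 < d) (S : Finset ℕ) :
    ∃ P : Fin d → Finset ℕ, IsPartition P S := by
  refine ⟨fun j => if j = ⟨0, hd⟩ then S else ∅, ?_, ?_⟩
  · intro i j hij
    by_cases hi : i = ⟨0, hd⟩ <;> by_cases hj : j = ⟨0, hd⟩ <;> simp_all
  · ext k
    simp only [mem_biUnion, mem_univ, true_and]
    constructor
    · rintro ⟨i, hi⟩
      split at hi
      · exact hi
      · simp at hi
    · intro hk
      exact ⟨⟨0, hd⟩, by simp [hk]⟩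

lemma bddAbove_MMSset (v : ℕ → ℝ) (d : ℕ) (S : Finset ℕ) :
    BddAbove {x : ℝ | ∃ P : Fin d → Finset ℕ, IsPartition P S ∧ x = ⨅ j, (P j).sum v} := by
  refine ⟨max 0 (S.sum fun k => |v k|), ?_⟩
  rintro x ⟨P, hP, rfl⟩
  rcases Nat.eq_zero_or_pos d with hd | hd
  · subst hd
    rw [Real.iInf_of_isEmpty]
    exact le_max_left _ _
  · refine le_trans (ciInf_le (Finite.bddBelow_range _) ⟨0, hd⟩) ?_
    refine le_trans ?_ (le_max_right _ _)
    calc (P ⟨0, hd⟩).sum v ≤ (P ⟨0, hd⟩).sum (fun k => |v k|) :=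
          Finset.sum_le_sum (fun k _ => le_abs_self _)
      _ ≤ S.sum (fun k => |v k|) :=
          Finset.sum_le_sum_of_subset_of_nonneg (partition_subset hP _)
            (fun k _ _ => abs_nonneg _)

lemma le_MMS {v : ℕ → ℝ} {d : ℕ} {S : Finset ℕ} {P : Fin d → Finset ℕ}
    (hP : IsPartition P S) : (⨅ j, (P j).sum v) ≤ MMS v d S :=
  le_csSup (bddAbove_MMSset v d S) ⟨P, hP, rfl⟩

lemma MMS_le_of {v : ℕ → ℝ} {d : ℕ} {S : Finset ℕ} {c : ℝ} (hd : 0 < d)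
    (h : ∀ P : Fin d → Finset ℕ, IsPartition P S → (⨅ j, (P j).sum v) ≤ c) :
    MMS v d S ≤ c := by
  obtain ⟨P0, h0⟩ := exists_partition hd S
  exact csSup_le ⟨_, P0, h0, rfl⟩ (by rintro x ⟨P, hP, rfl⟩; exact h P hP)

lemma MMS_image_le {v : ℕ → ℝ} {d : ℕ} (hd : 0 < d) {S1 S2 : Finset ℕ} (f : ℕ → ℕ)
    (hinj : ∀ a ∈ S2, ∀ b ∈ S2, f a = f b → a = b) (himg : S2.image f = S1)
    (hval : ∀ k ∈ S2, v k ≤ v (f k)) : MMS v d S2 ≤ MMS v d S1 := by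
  apply MMS_le_of hd
  intro P hP
  have hPsub : ∀ i, P i ⊆ S2 := fun i => partition_subset hP i
  have hQpart : IsPartition (fun j => (P j).image f) S1 := by
    constructor
    · intro i j hij
      rw [Finset.disjoint_left]
      rintro a ha ha'
      simp only [mem_image] at ha ha'
      obtain ⟨b, hb, rfl⟩ := ha
      obtain ⟨c, hc, hbc⟩ := ha'
      have hcb : c = b := hinj c (hPsub j hc) b (hPsub i hb) hbc
      exact Finset.disjoint_left.mp (hP.1 i j hij) hb (hcb ▸ hc)
    · rw [← himg, ← hP.2]
      exact (Finset.biUnion_image).symm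
  have : Nonempty (Fin d) := ⟨⟨0, hd⟩⟩
  refine le_trans ?_ (le_MMS hQpart)
  refine le_ciInf (fun j => ?_)
  refine le_trans (ciInf_le (Finite.bddBelow_range _) j) ?_
  rw [Finset.sum_image (fun a ha b hb => hinj a (hPsub j ha) b (hPsub j hb))]
  exact Finset.sum_le_sum (fun k hk => hval k (hPsub j hk))

lemma key_reduction (p m : ℕ) (v : ℕ → ℝ) (hm : 3*p+7 ≤ m)
    (hnn : ∀ k ∈ Icc 1 m, 0 ≤ v k)
    (hord : ∀ j k : ℕ, 1 ≤ j → j ≤ k → k ≤ m → v k ≤ v j) :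
    MMS v (p+2) (Icc 1 m) ≤ MMS v (p+1) (Icc 1 m \ Icc (3*p+4) (3*p+7)) := by
  classical
  apply MMS_le_of (Nat.succ_pos _)
  intro P hP
  set S := Icc 1 m with hS
  set T := Icc (3*p+4) (3*p+7) with hT
  have hTS : T ⊆ S := Icc_subset_Icc (by omega) hm
  have hPS : ∀ i, P i ⊆ S := fun i => partition_subset hP i
  set A' := Icc 1 (3*p+7) with hA'
  have hA'S : A' ⊆ S := Icc_subset_Icc le_rfl hm
  have hA'card : A'.card = 3*p+7 := by rw [hA', Nat.card_Icc]; omega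
  have hTA' : T ⊆ A' := Icc_subset_Icc (by omega) le_rfl
  have hTcard : T.card = 4 := by rw [hT, Nat.card_Icc]; omega
  -- pigeonhole: some bundle contains at least 4 goods of A'
  have hcover : A' = Finset.univ.biUnion (fun i => P i ∩ A') := by
    ext k
    simp only [mem_biUnion, mem_univ, true_and, mem_inter]
    constructor
    · intro hk
      have hk' : k ∈ Finset.univ.biUnion P := by rw [hP.2]; exact hA'S hk
      obtain ⟨i, _, hi⟩ := mem_biUnion.mp hk'
      exact ⟨i, hi, hk⟩
    · rintro ⟨i, _, hk⟩; exact hk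
  have hpig : ∃ i0 : Fin (p+2), 4 ≤ (P i0 ∩ A').card := by
    by_contra h
    push_neg at h
    have h1 : A'.card ≤ ∑ i : Fin (p+2), (P i ∩ A').card := by
      conv_lhs => rw [hcover]
      exact card_biUnion_le
    have h2 : ∑ i : Fin (p+2), (P i ∩ A').card ≤ ∑ _i : Fin (p+2), 3 :=
      Finset.sum_le_sum (fun i _ => by have := h i; omega)
    simp only [Finset.sum_const, card_univ, Fintype.card_fin, smul_eq_mul] at h2
    omega
  obtain ⟨i0, hi0⟩ := hpig
  set B := P i0 with hB
  set A := B ∩ A' with hA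
  have hAB : A ⊆ B := inter_subset_left
  -- counting: enough room in A \ T to compensate T \ B
  have hAT_sub : A \ T ⊆ Icc 1 (3*p+3) := by
    intro k hk
    rw [mem_sdiff, hA, mem_inter] at hk
    obtain ⟨⟨_, hk2⟩, hk3⟩ := hk
    rw [hA', mem_Icc] at hk2
    rw [hT, mem_Icc] at hk3
    rw [mem_Icc]
    omega
  have hTB_eq : T ∩ B = A ∩ T := by
    ext k
    rw [hA]
    simp only [mem_inter]
    constructor
    · rintro ⟨h1, h2⟩; exact ⟨⟨h2, hTA' h1⟩, h1⟩
    · rintro ⟨⟨h1, _⟩, h2⟩; exact ⟨h2, h1⟩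
  have hcards : (T \ B).card ≤ (A \ T).card := by
    have c1 : (T ∩ B).card + (T \ B).card = T.card := card_inter_add_card_sdiff T B
    have c2 : (A ∩ T).card + (A \ T).card = A.card := card_inter_add_card_sdiff A T
    have c4 : (T ∩ B).card = (A ∩ T).card := by rw [hTB_eq]
    omega
  obtain ⟨C, hCsub, hCcard⟩ := Finset.exists_subset_card_eq hcards
  have e := Finset.equivOfCardEq (hCcard.symm : (T \ B).card = C.card)
  set fc : ℕ → ℕ := fun t => if h : t ∈ T \ B then (e ⟨t, h⟩ : ℕ) else t with hfc
  have hfc_mem : ∀ t ∈ T \ B, fc t ∈ C := by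
    intro t ht
    simp only [hfc, dif_pos ht]
    exact (e ⟨t, ht⟩).2
  have hfc_inj : ∀ t ∈ T \ B, ∀ t' ∈ T \ B, fc t = fc t' → t = t' := by
    intro t ht t' ht' h
    simp only [hfc, dif_pos ht, dif_pos ht'] at h
    have h2 : e ⟨t, ht⟩ = e ⟨t', ht'⟩ := Subtype.ext h
    have h3 := e.injective h2
    simpa using h3
  have hfc_val : ∀ t ∈ T \ B, v t ≤ v (fc t) := by
    intro t ht
    have hC := hAT_sub (hCsub (hfc_mem t ht))
    have h2 := (mem_sdiff.mp ht).1
    rw [hT, mem_Icc] at h2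
    rw [mem_Icc] at hC
    exact hord (fc t) t hC.1 (by omega) (by omega)
  have hCBT : C ⊆ B \ T := fun k hk => by
    have := hCsub hk
    rw [mem_sdiff] at this ⊢
    exact ⟨hAB this.1, this.2⟩
  -- the new partition
  set emb : Fin (p+1) → Fin (p+2) := i0.succAbove with hemb
  have hembne : ∀ j, emb j ≠ i0 := fun j => Fin.succAbove_ne i0 j
  have hembinj : Function.Injective emb := Fin.succAbove_right_injective
  have hdisjB : ∀ j, Disjoint B (P (emb j)) := fun j => hP.1 i0 (emb j) (fun h => hembne j h.symm)
  have hTP : ∀ j, T ∩ P (emb j) ⊆ T \ B := by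
    intro j k hk
    rw [mem_inter] at hk
    rw [mem_sdiff]
    exact ⟨hk.1, fun hkB => Finset.disjoint_left.mp (hdisjB j) hkB hk.2⟩
  have himg_sub : ∀ j, (T ∩ P (emb j)).image fc ⊆ C := by
    intro j k hk
    obtain ⟨t, ht, rfl⟩ := mem_image.mp hk
    exact hfc_mem t (hTP j ht)
  have himg_sub' : ∀ j, (T ∩ P (emb j)).image fc ⊆ (T \ B).image fc :=
    fun j => image_subset_image (hTP j)
  set z : Fin (p+1) := ⟨0, Nat.succ_pos p⟩ with hz
  set R := (B \ T) \ ((T \ B).image fc) with hR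
  set Q : Fin (p+1) → Finset ℕ :=
    fun j => ((P (emb j) \ T) ∪ (T ∩ P (emb j)).image fc) ∪ (if j = z then R else ∅) with hQ
  -- Q is a partition of S \ T
  have hQsub : ∀ j, Q j ⊆ S \ T := by
    intro j k hk
    simp only [hQ] at hk
    rcases mem_union.mp hk with hk | hk
    · rcases mem_union.mp hk with hk | hk
      · rw [mem_sdiff] at hk ⊢
        exact ⟨hPS _ hk.1, hk.2⟩
      · have h1 := hCsub (himg_sub j hk)
        rw [mem_sdiff] at h1 ⊢
        exact ⟨hPS i0 (hAB h1.1), h1.2⟩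
    · split at hk
      · rw [hR, mem_sdiff] at hk
        rw [mem_sdiff] at hk ⊢
        exact ⟨hPS i0 hk.1.1, hk.1.2⟩
      · simp at hk
  have hQdisj : ∀ i j : Fin (p+1), i ≠ j → Disjoint (Q i) (Q j) := by
    have base_disj : ∀ i j : Fin (p+1), i ≠ j →
        Disjoint ((P (emb i) \ T) ∪ (T ∩ P (emb i)).image fc)
                 ((P (emb j) \ T) ∪ (T ∩ P (emb j)).image fc) := by
      intro i j hij
      have hPP : Disjoint (P (emb i)) (P (emb j)) :=
        hP.1 _ _ (fun h => hij (hembinj h))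
      rw [Finset.disjoint_union_left]
      constructor
      · rw [Finset.disjoint_union_right]
        constructor
        · exact Finset.disjoint_of_subset_left sdiff_subset
            (Finset.disjoint_of_subset_right sdiff_subset hPP)
        · refine Finset.disjoint_of_subset_left sdiff_subset ?_
          refine Finset.disjoint_of_subset_right (subset_trans (himg_sub j) (subset_trans hCBT sdiff_subset)) ?_
          exact hdisjB i |>.symm
      · rw [Finset.disjoint_union_right]
        constructor
        · refine Finset.disjoint_of_subset_right sdiff_subset ?_
          exact Finset.disjoint_of_subset_left (subset_trans (himg_sub i) (subset_trans hCBT sdiff_subset)) (hdisjB j)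
        · rw [Finset.disjoint_left]
          intro k hk hk'
          obtain ⟨t, ht, rfl⟩ := mem_image.mp hk
          obtain ⟨t', ht', heq⟩ := mem_image.mp hk'
          have : t' = t := hfc_inj t' (hTP j ht') t (hTP i ht) heq
          subst this
          exact Finset.disjoint_left.mp hPP (mem_inter.mp ht).2 (mem_inter.mp ht').2
    have base_R : ∀ i : Fin (p+1),
        Disjoint ((P (emb i) \ T) ∪ (T ∩ P (emb i)).image fc) R := by
      intro i
      rw [Finset.disjoint_union_left]
      constructor
      · refine Finset.disjoint_of_subset_left sdiff_subset ?_
        refine Finset.disjoint_of_subset_right (subset_trans sdiff_subset sdiff_subset) ?_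
        exact (hdisjB i).symm
      · refine Finset.disjoint_of_subset_left (himg_sub' i) ?_
        exact sdiff_disjoint.symm
    intro i j hij
    simp only [hQ]
    apply Finset.disjoint_union_left.mpr
    constructor
    · apply Finset.disjoint_union_right.mpr
      constructor
      · exact base_disj i j hij
      · split
        · exact base_R i
        · exact disjoint_empty_right _
    · apply Finset.disjoint_union_right.mpr
      constructor
      · split
        · exact (base_R j).symm
        · exact disjoint_empty_left _
      · by_cases hi : i = z
        · have hj : ¬ j = z := fun h => hij (hi.trans h.symm)
          simp [hi, hj]
        · simp [hi]
  have hQup : Finset.univ.biUnion Q = S \ T := by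
    apply Finset.Subset.antisymm
    · intro k hk
      obtain ⟨j, _, hj⟩ := mem_biUnion.mp hk
      exact hQsub j hj
    · intro k hk
      have hkS := (mem_sdiff.mp hk).1
      have hkT := (mem_sdiff.mp hk).2
      have : k ∈ Finset.univ.biUnion P := by rw [hP.2]; exact hkS
      obtain ⟨a, _, ha⟩ := mem_biUnion.mp this
      by_cases haa : a = i0
      · rw [haa] at ha
        by_cases hkim : k ∈ (T \ B).image fc
        · obtain ⟨t, ht, rfl⟩ := mem_image.mp hkim
          have htS : t ∈ S := hTS (mem_sdiff.mp ht).1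
          have : t ∈ Finset.univ.biUnion P := by rw [hP.2]; exact htS
          obtain ⟨b, _, htb⟩ := mem_biUnion.mp this
          have hbne : b ≠ i0 := by
            rintro rfl
            exact (mem_sdiff.mp ht).2 htb
          obtain ⟨j, hj⟩ := Fin.exists_succAbove_eq hbne
          refine mem_biUnion.mpr ⟨j, mem_univ _, ?_⟩
          simp only [hQ]
          refine mem_union_left _ (mem_union_right _ ?_)
          refine mem_image.mpr ⟨t, ?_, rfl⟩
          rw [mem_inter, hemb, hj]
          exact ⟨(mem_sdiff.mp ht).1, htb⟩
        · refine mem_biUnion.mpr ⟨z, mem_univ _, ?_⟩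
          simp only [hQ]
          rw [if_true]
          refine mem_union_right _ ?_
          rw [hR, mem_sdiff, mem_sdiff]
          exact ⟨⟨ha, hkT⟩, hkim⟩
      · obtain ⟨j, hj⟩ := Fin.exists_succAbove_eq haa
        refine mem_biUnion.mpr ⟨j, mem_univ _, ?_⟩
        simp only [hQ]
        refine mem_union_left _ (mem_union_left _ ?_)
        rw [mem_sdiff, hemb, hj]
        exact ⟨ha, hkT⟩
  -- value bound
  have hval : ∀ j, (P (emb j)).sum v ≤ (Q j).sum v := by
    intro j
    have hsplit : ((P (emb j) \ T) ∪ (T ∩ P (emb j)).image fc) ⊆ Q j := by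
      simp only [hQ]
      exact subset_union_left
    have hmain : ((P (emb j) \ T) ∪ (T ∩ P (emb j)).image fc).sum v ≤ (Q j).sum v := by
      refine Finset.sum_le_sum_of_subset_of_nonneg hsplit (fun k hk _ => ?_)
      exact hnn k ((mem_sdiff.mp (hQsub j hk)).1)
    have hdisj2 : Disjoint (P (emb j) \ T) ((T ∩ P (emb j)).image fc) := by
      refine Finset.disjoint_of_subset_left sdiff_subset ?_
      refine Finset.disjoint_of_subset_right (subset_trans (himg_sub j) (subset_trans hCBT sdiff_subset)) ?_
      exact (hdisjB j).symm
    rw [Finset.sum_union hdisj2] at hmain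
    have himgsum : (T ∩ P (emb j)).sum v ≤ ((T ∩ P (emb j)).image fc).sum v := by
      rw [Finset.sum_image (fun a ha b hb => hfc_inj a (hTP j ha) b (hTP j hb))]
      exact Finset.sum_le_sum (fun t ht => hfc_val t (hTP j ht))
    have hPsum : (P (emb j) ∩ T).sum v + (P (emb j) \ T).sum v = (P (emb j)).sum v :=
      Finset.sum_inter_add_sum_sdiff _ _ _
    have hcomm : (P (emb j) ∩ T) = (T ∩ P (emb j)) := inter_comm _ _
    rw [hcomm] at hPsum
    linarith
  exact le_trans
    (le_ciInf (fun j => le_trans (ciInf_le (Finite.bddBelow_range _) (emb j)) (hval j)))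
    (le_MMS ⟨hQdisj, hQup⟩)

/-- removing four distinct goods with indices at least 3n−2, 3n−1, 3n, 3n+1
together with one agent does not decrease the MMS value (validity of rule R₃). -/
theorem valid_reduction_R3
    (m n : ℕ) (hn : 2 ≤ n) (v : ℕ → ℝ)
    (hnn : ∀ k ∈ Finset.Icc 1 m, 0 ≤ v k)
    (hord : ∀ j k : ℕ, 1 ≤ j → j ≤ k → k ≤ m → v k ≤ v j)
    (g₁ g₂ g₃ g₄ : ℕ)
    (hg₁m : g₁ ∈ Finset.Icc 1 m) (hg₂m : g₂ ∈ Finset.Icc 1 m)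
    (hg₃m : g₃ ∈ Finset.Icc 1 m) (hg₄m : g₄ ∈ Finset.Icc 1 m)
    (h12 : g₁ ≠ g₂) (h13 : g₁ ≠ g₃) (h14 : g₁ ≠ g₄)
    (h23 : g₂ ≠ g₃) (h24 : g₂ ≠ g₄) (h34 : g₃ ≠ g₄)
    (hg₁ : 3*n - 2 ≤ g₁) (hg₂ : 3*n - 1 ≤ g₂) (hg₃ : 3*n ≤ g₃) (hg₄ : 3*n + 1 ≤ g₄) :
    MMS v n (Finset.Icc 1 m) ≤ MMS v (n - 1) (Finset.Icc 1 m \ {g₁, g₂, g₃, g₄}) := by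
  classical
  obtain ⟨p, rfl⟩ : ∃ p, n = p + 2 := ⟨n - 2, by omega⟩
  rw [mem_Icc] at hg₁m hg₂m hg₃m hg₄m
  have hm : 3*p+7 ≤ m := by omega
  have hkey := key_reduction p m v hm hnn hord
  have hn1 : p + 2 - 1 = p + 1 := by omega
  rw [hn1]
  refine le_trans hkey ?_
  set S := Icc 1 m with hS
  set T := Icc (3*p+4) (3*p+7) with hT
  set G : Finset ℕ := {g₁, g₂, g₃, g₄} with hG
  have hGmem : ∀ k ∈ G, (1 ≤ k ∧ k ≤ m) ∧ 3*p+4 ≤ k := by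
    intro k hk
    rw [hG] at hk
    simp only [mem_insert, mem_singleton] at hk
    rcases hk with rfl | rfl | rfl | rfl <;> omega
  have hGS : G ⊆ S := by
    intro k hk
    rw [hS, mem_Icc]
    exact (hGmem k hk).1
  have hTS : T ⊆ S := by
    rw [hS, hT]
    exact Icc_subset_Icc (by omega) hm
  have hGcard : G.card = 4 := by
    rw [hG]
    rw [show ({g₁, g₂, g₃, g₄} : Finset ℕ) = insert g₁ (insert g₂ (insert g₃ {g₄})) from rfl]
    rw [card_insert_of_notMem (by simp [h12, h13, h14]),
        card_insert_of_notMem (by simp [h23, h24]),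
        card_insert_of_notMem (by simp [h34]), card_singleton]
  have hTcard : T.card = 4 := by rw [hT, Nat.card_Icc]; omega
  have hcard_eq : (G \ T).card = (T \ G).card := by
    have c1 := card_inter_add_card_sdiff G T
    have c2 := card_inter_add_card_sdiff T G
    have c3 : (G ∩ T).card = (T ∩ G).card := by rw [inter_comm]
    omega
  have e := Finset.equivOfCardEq hcard_eq
  set f : ℕ → ℕ := fun k => if h : k ∈ G \ T then (e ⟨k, h⟩ : ℕ) else k with hf
  have hf_mem : ∀ k, (h : k ∈ G \ T) → f k ∈ T \ G := by
    intro k h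
    simp only [hf, dif_pos h]
    exact (e ⟨k, h⟩).2
  have hGT_big : ∀ k ∈ G \ T, 3*p+8 ≤ k := by
    intro k hk
    rw [mem_sdiff] at hk
    have h1 := (hGmem k hk.1).2
    have h2 : ¬ (3*p+4 ≤ k ∧ k ≤ 3*p+7) := by
      intro h
      exact hk.2 (by rw [hT, mem_Icc]; exact h)
    omega
  have hinj : ∀ a ∈ S \ T, ∀ b ∈ S \ T, f a = f b → a = b := by
    intro a ha b hb hab
    by_cases h1 : a ∈ G \ T <;> by_cases h2 : b ∈ G \ T
    · have h3 : e ⟨a, h1⟩ = e ⟨b, h2⟩ := by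
        apply Subtype.ext
        simpa only [hf, dif_pos h1, dif_pos h2] using hab
      simpa using e.injective h3
    · exfalso
      have h3 := hf_mem a h1
      simp only [hf, dif_pos h1] at h3
      simp only [hf, dif_pos h1, dif_neg h2] at hab
      have : b ∈ T \ G := hab ▸ h3
      exact (mem_sdiff.mp hb).2 (mem_sdiff.mp this).1
    · exfalso
      have h3 := hf_mem b h2
      simp only [hf, dif_pos h2] at h3
      simp only [hf, dif_neg h1, dif_pos h2] at hab
      have : a ∈ T \ G := hab.symm ▸ h3
      exact (mem_sdiff.mp ha).2 (mem_sdiff.mp this).1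
    · simpa only [hf, dif_neg h1, dif_neg h2] using hab
  have himg : (S \ T).image f = S \ G := by
    apply Finset.Subset.antisymm
    · intro k hk
      obtain ⟨a, ha, rfl⟩ := mem_image.mp hk
      by_cases h1 : a ∈ G \ T
      · have h2 := hf_mem a h1
        rw [mem_sdiff] at h2 ⊢
        exact ⟨hTS h2.1, h2.2⟩
      · rw [hf]
        simp only [dif_neg h1]
        rw [mem_sdiff] at ha ⊢
        refine ⟨ha.1, fun hG' => ?_⟩
        exact h1 (mem_sdiff.mpr ⟨hG', ha.2⟩)
    · intro k hk
      rw [mem_sdiff] at hk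
      by_cases h1 : k ∈ T
      · have h2 : k ∈ T \ G := mem_sdiff.mpr ⟨h1, hk.2⟩
        obtain ⟨g, hg⟩ := e.surjective ⟨k, h2⟩
        refine mem_image.mpr ⟨(g : ℕ), ?_, ?_⟩
        · have h3 := g.2
          rw [mem_sdiff] at h3 ⊢
          exact ⟨hGS h3.1, h3.2⟩
        · simp only [hf, dif_pos g.2]
          rw [Subtype.ext_iff] at hg
          simpa using hg
      · refine mem_image.mpr ⟨k, mem_sdiff.mpr ⟨hk.1, h1⟩, ?_⟩
        have h2 : k ∉ G \ T := fun h => hk.2 (mem_sdiff.mp h).1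
        simp only [hf, dif_neg h2]
  have hval : ∀ k ∈ S \ T, v k ≤ v (f k) := by
    intro k hk
    by_cases h1 : k ∈ G \ T
    · have h2 := hf_mem k h1
      have h3 := (mem_sdiff.mp h2).1
      rw [hT, mem_Icc] at h3
      have h4 := hGT_big k h1
      have h5 : k ≤ m := (hGmem k (mem_sdiff.mp h1).1).1.2
      exact hord (f k) k (by omega) (by omega) h5
    · simp only [hf, dif_neg h1]
      exact le_refl _
  exact MMS_image_le (Nat.succ_pos p) f hinj himg hval
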